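/- The Ehrhart series of the edge polytope of an odd cycle with 2n − 1 edges equals 1/(1 − t)^{2n−1}. -/

import Mathlib

open Pointwise
open scoped Classical

/-- The set of vertices of the edge polytope: for each edge {i,j}, the 0/1 indicator
vector of {i,j}. The edge polytope is their convex hull. -/
noncomputable def edgePolytope {V : Type*} [Fintype V] (G : SimpleGraph V) : Set (V → ℝ) :=
  convexHull ℝ {x | ∃ i j, G.Adj i j ∧ x = fun k => if k = i ∨ k = j then (1 : ℝ) else 0}

/-- Number of lattice points in the `m`-th dilate of the edge polytope. -/
noncomputable def ehrhartCount {V : Type*} [Fintype V] (G : SimpleGraph V) (m : ℕ) : ℕ :=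
  Nat.card {x : V → ℤ // (fun v => (x v : ℝ)) ∈ (m : ℝ) • edgePolytope G}

/-- The Ehrhart series of the edge polytope of `G`. -/
noncomputable def ehrhartSeries {V : Type*} [Fintype V] (G : SimpleGraph V) : PowerSeries ℚ :=
  PowerSeries.mk fun m => (ehrhartCount G m : ℚ)

/-! Write `A c v = c (v - 1) + c v` for the incidence map of the cycle `C_N`. The edge polytope
is the image under `A` of the standard simplex, so the lattice points of `m • P` are the integral
vectors `A c` with `c ≥ 0` and `∑ c = m`. When `N` is odd, the vertices other than `v` pair off
into the edges `{v + 2i + 1, v + 2i + 2}`, whence `c v = ∑ c - ∑ i < N / 2, A c (v + 2i + 2)`: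
`c` is determined by `A c` and `∑ c`, and is integral when they are. So the lattice points of
`m • P` correspond to the `μ : Fin N → ℕ` with `∑ μ = m`; there are `multichoose N m` of them,
which is the `m`-th coefficient of `(1 - t)⁻ᴺ`. -/

open Finset

section StdSimplex

variable {𝕜 ι : Type*} [Field 𝕜] [LinearOrder 𝕜] [IsStrictOrderedRing 𝕜] [Fintype ι] [Nonempty ι]

theorem mem_smul_stdSimplex_iff {r : 𝕜} (hr : 0 ≤ r) {c : ι → 𝕜} :
    c ∈ r • stdSimplex 𝕜 ι ↔ (∀ i, 0 ≤ c i) ∧ ∑ i, c i = r := by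
  rcases hr.eq_or_lt with rfl | hr
  · rw [Set.zero_smul_set ⟨_, single_mem_stdSimplex 𝕜 (Classical.arbitrary ι)⟩]
    constructor
    · rintro rfl
      simp
    · rintro ⟨hc, hsum⟩
      exact funext fun i => (sum_eq_zero_iff_of_nonneg fun j _ => hc j).1 hsum i (mem_univ i)
  · rw [Set.mem_smul_set_iff_inv_smul_mem₀ hr.ne']
    simp only [stdSimplex, Set.mem_ofPred_eq, Pi.smul_apply, smul_eq_mul, ← mul_sum]
    simp [inv_mul_eq_one₀ hr.ne', mul_nonneg_iff_of_pos_left (inv_pos.2 hr), eq_comm]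

end StdSimplex

theorem Finset.sum_range_two_mul_add_one {M : Type*} [AddCommMonoid M] (f : ℕ → M) (k : ℕ) :
    ∑ j ∈ range (2 * k + 1), f j = f 0 + ∑ i ∈ range k, (f (2 * i + 1) + f (2 * i + 2)) := by
  induction k with
  | zero => simp
  | succ k ih =>
    rw [show 2 * (k + 1) + 1 = 2 * k + 1 + 1 + 1 by ring, sum_range_succ, sum_range_succ, ih,
      sum_range_succ, add_assoc, add_assoc]

section Cycle

open Fin.NatCast

variable {N : ℕ} [NeZero N]

/-- Edge `i` of `C_N` joins `i` and `i + 1`, so that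
`cycleIncidence c = ∑ i, c i • (e i + e (i + 1))`. -/
def cycleIncidence {M : Type*} [Add M] (c : Fin N → M) : Fin N → M :=
  fun v => c (v - 1) + c v

theorem Fin.sum_range_comp_add_natCast {M : Type*} [AddCommMonoid M] (f : Fin N → M) (v : Fin N) :
    ∑ j ∈ range N, f (v + (j : Fin N)) = ∑ w, f w := by
  rw [← Fin.sum_univ_eq_sum_range (fun j => f (v + (j : Fin N)))]
  simp only [Fin.cast_val_eq_self]
  exact Equiv.sum_comp (Equiv.addLeft v) f

theorem eq_sum_sub_sum_cycleIncidence {M : Type*} [AddCommGroup M] (hN : Odd N)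
    (c : Fin N → M) (v : Fin N) :
    c v = ∑ w, c w - ∑ i ∈ range (N / 2), cycleIncidence c (v + ((2 * i + 2 : ℕ) : Fin N)) := by
  have hrange : range N = range (2 * (N / 2) + 1) := by
    rw [Nat.two_mul_div_two_add_one_of_odd hN]
  rw [← Fin.sum_range_comp_add_natCast c v, hrange, sum_range_two_mul_add_one]
  have hpair (j : ℕ) : cycleIncidence c (v + ((j + 2 : ℕ) : Fin N)) =
      c (v + ((j + 1 : ℕ) : Fin N)) + c (v + ((j + 2 : ℕ) : Fin N)) := by
    rw [cycleIncidence, Nat.cast_succ (j + 1), ← add_assoc, add_sub_cancel_right]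
  simp only [hpair, Nat.cast_zero, add_zero, add_sub_cancel_right]

theorem eq_of_cycleIncidence_eq_of_sum_eq {M : Type*} [AddCommGroup M] (hN : Odd N)
    {c c' : Fin N → M} (h : cycleIncidence c = cycleIncidence c')
    (hsum : ∑ w, c w = ∑ w, c' w) : c = c' :=
  funext fun v => by
    rw [eq_sum_sub_sum_cycleIncidence hN c v, eq_sum_sub_sum_cycleIncidence hN c' v, h, hsum]

theorem exists_intCast_eq_of_cycleIncidence {R : Type*} [Ring R] (hN : Odd N) {c : Fin N → R}
    {x : Fin N → ℤ} {m : ℤ} (hx : cycleIncidence c = fun v => (x v : R))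
    (hm : ∑ w, c w = m) : ∃ z : Fin N → ℤ, c = fun v => (z v : R) :=
  ⟨fun v => m - ∑ i ∈ range (N / 2), x (v + ((2 * i + 2 : ℕ) : Fin N)), funext fun v => by
    rw [eq_sum_sub_sum_cycleIncidence hN c v, hx, hm]
    push_cast
    rfl⟩

theorem isLinearMap_cycleIncidence (R M : Type*) [Semiring R] [AddCommMonoid M] [Module R M] :
    IsLinearMap R (cycleIncidence : (Fin N → M) → Fin N → M) where
  map_add _ _ := funext fun _ => add_add_add_comm _ _ _ _
  map_smul r _ := funext fun _ => (smul_add r _ _).symm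

theorem cycleIncidence_single {R : Type*} [AddMonoidWithOne R] (h : 1 < N) (i : Fin N) :
    cycleIncidence (Pi.single i (1 : R)) = fun v => if v = i ∨ v = i + 1 then 1 else 0 := by
  have hone : (1 : Fin N) ≠ 0 := by
    simp [Fin.ext_iff, Nat.mod_eq_of_lt h]
  have hi : i ≠ i + 1 := fun h' => hone (left_eq_add.1 h')
  funext v
  rcases eq_or_ne v i with rfl | hv
  · simp [cycleIncidence, hi, h.ne']
  · simp [cycleIncidence, Pi.single_apply, sub_eq_iff_eq_add, hv]

theorem cycleGraph_adj_iff (h : 1 < N) {u v : Fin N} :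
    (SimpleGraph.cycleGraph N).Adj u v ↔ u = v + 1 ∨ v = u + 1 := by
  have hval (w : Fin N) : w.val = 1 ↔ w = 1 := by
    rw [Fin.ext_iff, Fin.val_one', Nat.mod_eq_of_lt h]
  rw [SimpleGraph.cycleGraph_adj', hval, hval, sub_eq_iff_eq_add', sub_eq_iff_eq_add']

theorem edgePolytope_cycleGraph (h : 1 < N) :
    edgePolytope (SimpleGraph.cycleGraph N) = cycleIncidence '' stdSimplex ℝ (Fin N) := by
  rw [edgePolytope, ← convexHull_rangle_single_eq_stdSimplex,
    (isLinearMap_cycleIncidence ℝ ℝ).image_convexHull, ← Set.range_comp]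
  congr 1
  ext x
  simp only [Function.comp_def, cycleIncidence_single h, Set.mem_range, Set.mem_ofPred_eq,
    cycleGraph_adj_iff h]
  constructor
  · rintro ⟨i, j, rfl | rfl, rfl⟩
    · exact ⟨j, funext fun _ => by simp only [or_comm]⟩
    · exact ⟨i, funext fun _ => by congr⟩
  · rintro ⟨i, rfl⟩
    exact ⟨i, i + 1, Or.inr rfl, funext fun _ => by congr⟩

theorem mem_smul_edgePolytope_cycleGraph (h : 1 < N) {r : ℝ} (hr : 0 ≤ r) {x : Fin N → ℝ} :
    x ∈ r • edgePolytope (SimpleGraph.cycleGraph N) ↔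
      ∃ c : Fin N → ℝ, (∀ i, 0 ≤ c i) ∧ ∑ i, c i = r ∧ cycleIncidence c = x := by
  let A := IsLinearMap.mk' _ (isLinearMap_cycleIncidence ℝ ℝ (N := N))
  rw [edgePolytope_cycleGraph h, show cycleIncidence = ⇑A from rfl, ← image_smul_set]
  simp only [Set.mem_image, mem_smul_stdSimplex_iff hr, and_assoc]

theorem intCast_mem_smul_edgePolytope_cycleGraph_iff (hN : Odd N) (h : 1 < N) (m : ℕ)
    (x : Fin N → ℤ) :
    (fun v => (x v : ℝ)) ∈ (m : ℝ) • edgePolytope (SimpleGraph.cycleGraph N) ↔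
      ∃ μ : Fin N → ℕ, ∑ i, μ i = m ∧ cycleIncidence (fun v => (μ v : ℤ)) = x := by
  rw [mem_smul_edgePolytope_cycleGraph h m.cast_nonneg]
  constructor
  · rintro ⟨c, hc0, hcm, hcx⟩
    obtain ⟨z, rfl⟩ := exists_intCast_eq_of_cycleIncidence hN (m := m) hcx (by exact_mod_cast hcm)
    have hz0 (v : Fin N) : 0 ≤ z v := Int.cast_nonneg_iff.1 (hc0 v)
    refine ⟨fun v => (z v).toNat, ?_, funext fun v => ?_⟩
    · apply Nat.cast_injective (R := ℤ)
      push_cast [Int.toNat_of_nonneg (hz0 _)]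
      exact_mod_cast (by simpa using hcm : ∑ v, (z v : ℝ) = m)
    · have hxv := congrFun hcx v
      simp only [cycleIncidence, Int.toNat_of_nonneg (hz0 _)] at hxv ⊢
      exact_mod_cast hxv
  · rintro ⟨μ, hμ, rfl⟩
    exact ⟨fun v => μ v, fun _ => Nat.cast_nonneg _, by simp only [← Nat.cast_sum, hμ],
      funext fun _ => by simp [cycleIncidence]⟩

theorem ehrhartCount_cycleGraph_of_odd (hN : Odd N) (h : 1 < N) (m : ℕ) :
    ehrhartCount (SimpleGraph.cycleGraph N) m = Nat.card {μ : Fin N → ℕ // ∑ i, μ i = m} := by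
  let toLatticePoint (μ : {μ : Fin N → ℕ // ∑ i, μ i = m}) : {x : Fin N → ℤ //
      (fun v => (x v : ℝ)) ∈ (m : ℝ) • edgePolytope (SimpleGraph.cycleGraph N)} :=
    ⟨_, (intCast_mem_smul_edgePolytope_cycleGraph_iff hN h m _).2 ⟨μ.1, μ.2, rfl⟩⟩
  refine (Nat.card_congr (Equiv.ofBijective toLatticePoint ⟨fun μ ν hμν => ?_, fun x => ?_⟩)).symm
  · have hcast : (fun v => (μ.1 v : ℤ)) = fun v => (ν.1 v : ℤ) :=
      eq_of_cycleIncidence_eq_of_sum_eq hN (congrArg Subtype.val hμν)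
        (by simp only [← Nat.cast_sum, μ.2, ν.2])
    exact Subtype.ext (funext fun v => Nat.cast_injective (congrFun hcast v))
  · obtain ⟨μ, hμ, hx⟩ := (intCast_mem_smul_edgePolytope_cycleGraph_iff hN h m x.1).1 x.2
    exact ⟨⟨μ, hμ⟩, Subtype.ext hx⟩

theorem Nat.card_fun_sum_eq_multichoose (α : Type*) [Fintype α] (m : ℕ) :
    Nat.card {μ : α → ℕ // ∑ i, μ i = m} = (Fintype.card α).multichoose m := by
  rw [← Nat.card_congr (Sym.equivNatSumOfFintype α m), Nat.card_eq_fintype_card,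
    Sym.card_sym_eq_multichoose]

theorem ehrhartSeries_cycleGraph_mul_one_sub_X_pow (hN : Odd N) (h : 1 < N) :
    ehrhartSeries (SimpleGraph.cycleGraph N) * (1 - PowerSeries.X) ^ N = 1 := by
  obtain ⟨d, rfl⟩ : ∃ d, N = d + 1 := ⟨N - 1, by omega⟩
  convert PowerSeries.mk_add_choose_mul_one_sub_pow_eq_one ℚ d using 2
  refine PowerSeries.ext fun m => ?_
  rw [ehrhartSeries, PowerSeries.coeff_mk, PowerSeries.coeff_mk,
    ehrhartCount_cycleGraph_of_odd hN h, Nat.card_fun_sum_eq_multichoose, Fintype.card_fin,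
    Nat.multichoose_eq, show d + 1 + m - 1 = d + m by omega, Nat.choose_symm_add]

end Cycle

/-- The Ehrhart series of the edge polytope of an odd cycle with `2n - 1` edges
equals `1 / (1 - t)^(2n-1)`. -/
theorem ehrhartSeries_odd_cycle (n : ℕ) (hn : 2 ≤ n) :
    ehrhartSeries (SimpleGraph.cycleGraph (2 * n - 1)) * (1 - PowerSeries.X) ^ (2 * n - 1) =
      1 := by
  have : NeZero (2 * n - 1) := ⟨by omega⟩
  exact ehrhartSeries_cycleGraph_mul_one_sub_X_pow ⟨n - 1, by omega⟩ (by omega)
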